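/- arXiv:1303.5557 — 2 statements merged into one kernel-verified Lean document; each statement's English description precedes it below -/
import Mathlib

section
/- Let E be the dual of a separable Banach space E_*. If E has the uniform weak* Kadec-Klee property, then the weak* topology and the norm topology coincide on the unit sphere of E. -/
/-!
Suppose a sequence `yₙ` on the unit sphere converged weak* to `x` on the sphere but stayed
`ε`-far from `x` in norm. Testing `yₙ - x` against almost norming vectors and using weak*
convergence on each of them, one extracts a subsequence that is `ε/4`-separated in norm. Its weak*
closure is the subsequence together with `x`, all of norm one, contradicting UKK*. Hence weak*
convergent sequences on the sphere converge in norm. Since the dual unit ball is weak* compact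
and metrizable (the predual being separable), sequences suffice to compare the two topologies.
-/

open NormedSpace Filter Metric Topology

/-- Uniform weak* Kadec-Klee property of the dual of `X`. -/
def UKKStar (X : Type*) [NormedAddCommGroup X] [NormedSpace ℝ X] : Prop :=
  ∀ ε > (0 : ℝ), ∃ δ : ℝ, 0 < δ ∧ δ < 1 ∧
    ∀ C : Set (StrongDual ℝ X), C ⊆ closedBall (0 : StrongDual ℝ X) 1 →
      (∃ x : ℕ → StrongDual ℝ X, (∀ i, x i ∈ C) ∧ ∀ i j, i ≠ j → ε < ‖x i - x j‖) →
      ∃ y ∈ closure (StrongDual.toWeakDual '' C : Set (WeakDual ℝ X)),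
        ‖WeakDual.toStrongDual y‖ < δ

theorem Filter.exists_strictMono_forall_lt_of_eventually {P : ℕ → ℕ → Prop}
    (h : ∀ a, ∀ᶠ b in atTop, P a b) :
    ∃ φ : ℕ → ℕ, StrictMono φ ∧ ∀ i j, i < j → P (φ i) (φ j) := by
  obtain ⟨φ, -, hφ⟩ := exists_seq_of_forall_finset_exists (fun _ => True)
    (fun a b => a < b ∧ P a b) fun s _ =>
      (((eventually_all_finset s).2 fun a _ => (eventually_gt_atTop a).and (h a)).exists).imp
        fun _ hb => ⟨trivial, hb⟩
  exact ⟨φ, fun i j hij => (hφ i j hij).1, fun i j hij => (hφ i j hij).2⟩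

theorem Topology.IsInducing.of_seq_tendsto {X Y : Type*} [TopologicalSpace X]
    [TopologicalSpace Y] [FirstCountableTopology Y] {f : X → Y} (hf : Continuous f)
    (h : ∀ (u : ℕ → X) (a : X), Tendsto (f ∘ u) atTop (𝓝 (f a)) → Tendsto u atTop (𝓝 a)) :
    IsInducing f :=
  isInducing_iff_nhds.2 fun a => le_antisymm (hf.tendsto a).le_comap <|
    tendsto_id'.1 <| tendsto_iff_seq_tendsto.2 fun u hu => h u a (tendsto_comap_iff.1 hu)

theorem StrongDual.exists_strictMono_separated_of_tendsto_apply_zero {𝕜 X : Type*}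
    [DenselyNormedField 𝕜] [NormedAddCommGroup X] [NormedSpace 𝕜 X]
    {z : ℕ → StrongDual 𝕜 X} {ε : ℝ} (hε : 0 < ε)
    (hz : ∀ w, Tendsto (fun n => z n w) atTop (𝓝 0)) (hsep : ∀ n, ε ≤ ‖z n‖) :
    ∃ φ : ℕ → ℕ, StrictMono φ ∧ ∀ i j, i ≠ j → ε / 4 < ‖z (φ i) - z (φ j)‖ := by
  choose v hv_norm hv_apply using fun n =>
    (z n).exists_lt_apply_of_lt_opNorm (r := ε / 2) (by linarith [hsep n])
  obtain ⟨φ, hφ, hsmall⟩ := exists_strictMono_forall_lt_of_eventually fun a =>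
    (NormedAddGroup.tendsto_nhds_zero.1 (hz (v a))) (ε / 4) (by positivity)
  have hlt : ∀ i j, i < j → ε / 4 < ‖z (φ i) - z (φ j)‖ := fun i j hij =>
    calc ε / 4 < ‖z (φ i) (v (φ i))‖ - ‖z (φ j) (v (φ i))‖ := by
          linarith [hv_apply (φ i), hsmall i j hij]
      _ ≤ ‖(z (φ i) - z (φ j)) (v (φ i))‖ := norm_sub_norm_le _ _
      _ ≤ ‖z (φ i) - z (φ j)‖ := (z (φ i) - z (φ j)).unit_le_opNorm _ (hv_norm _).le
  refine ⟨φ, hφ, fun i j hij => hij.lt_or_gt.elim (hlt i j) fun hji => ?_⟩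
  rw [norm_sub_rev]
  exact hlt j i hji

namespace UKKStar

variable {X : Type*} [NormedAddCommGroup X] [NormedSpace ℝ X]

theorem exists_norm_sub_lt (hUKK : UKKStar X) {x : StrongDual ℝ X} (hx : ‖x‖ = 1)
    {y : ℕ → StrongDual ℝ X} (hy : ∀ n, ‖y n‖ = 1)
    (hconv : Tendsto (fun n => StrongDual.toWeakDual (y n)) atTop (𝓝 (StrongDual.toWeakDual x)))
    {ε : ℝ} (hε : 0 < ε) : ∃ n, ‖y n - x‖ < ε := by
  by_contra! hsep
  have hpointwise : ∀ w, Tendsto (fun n => (y n - x) w) atTop (𝓝 0) := fun w => by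
    simpa using ((WeakDual.eval_continuous w).tendsto _ |>.comp hconv).sub_const (x w)
  obtain ⟨φ, hφ, hφsep⟩ :=
    StrongDual.exists_strictMono_separated_of_tendsto_apply_zero hε hpointwise hsep
  obtain ⟨δ, -, hδ, hC⟩ := hUKK (ε / 4) (by positivity)
  obtain ⟨y₀, hy₀, hy₀δ⟩ := hC (Set.range (y ∘ φ))
    (Set.range_subset_iff.2 fun k => by simp [hy])
    ⟨y ∘ φ, fun k => ⟨k, rfl⟩, fun i j hij => by
      simpa only [Function.comp_apply, sub_sub_sub_cancel_right] using hφsep i j hij⟩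
  have hsub : Tendsto (fun k => StrongDual.toWeakDual (y (φ k))) atTop
      (𝓝 (StrongDual.toWeakDual x)) := hconv.comp hφ.tendsto_atTop
  rw [← Set.range_comp] at hy₀
  have hy₀_norm : ‖WeakDual.toStrongDual y₀‖ = 1 := by
    rcases closure_minimal (Set.subset_insert _ _) hsub.isCompact_insert_range.isClosed hy₀ with
      rfl | ⟨k, rfl⟩
    exacts [hx, hy (φ k)]
  linarith

theorem tendsto_of_tendsto_toWeakDual (hUKK : UKKStar X) {x : StrongDual ℝ X} (hx : ‖x‖ = 1)
    {y : ℕ → StrongDual ℝ X} (hy : ∀ n, ‖y n‖ = 1)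
    (hconv : Tendsto (fun n => StrongDual.toWeakDual (y n)) atTop (𝓝 (StrongDual.toWeakDual x))) :
    Tendsto y atTop (𝓝 x) := by
  refine Metric.tendsto_atTop.2 fun ε hε => ?_
  by_contra! hfar
  obtain ⟨ψ, hψ, hψfar⟩ := extraction_of_frequently_atTop (frequently_atTop.2 hfar)
  obtain ⟨n, hn⟩ := hUKK.exists_norm_sub_lt hx (fun n => hy (ψ n))
    (hconv.comp hψ.tendsto_atTop) hε
  exact (hψfar n).not_gt (by rwa [dist_eq_norm])

end UKKStar

theorem ukkStar_weakStar_eq_norm_on_sphere_general (X : Type*) [NormedAddCommGroup X]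
    [NormedSpace ℝ X] [TopologicalSpace.SeparableSpace X]
    (hUKK : UKKStar X) :
    Topology.IsInducing
      (fun x : sphere (0 : StrongDual ℝ X) 1 => StrongDual.toWeakDual (x : StrongDual ℝ X)) := by
  set K : Set (WeakDual ℝ X) := WeakDual.toStrongDual ⁻¹' closedBall 0 1
  have : TopologicalSpace.MetrizableSpace K :=
    WeakDual.metrizable_of_isCompact ℝ X K (WeakDual.isCompact_closedBall 0 1)
  let g : sphere (0 : StrongDual ℝ X) 1 → K := fun x =>
    ⟨StrongDual.toWeakDual x, by simp [K, norm_eq_of_mem_sphere x]⟩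
  have hg_cont : Continuous g :=
    (NormedSpace.Dual.toWeakDual_continuous.comp continuous_subtype_val).subtype_mk _
  have hg : Topology.IsInducing g := .of_seq_tendsto hg_cont fun u a hu =>
    tendsto_subtype_rng.2 <| hUKK.tendsto_of_tendsto_toWeakDual (norm_eq_of_mem_sphere a)
      (fun n => norm_eq_of_mem_sphere (u n)) ((continuous_subtype_val.tendsto (g a)).comp hu)
  exact (Topology.IsInducing.subtypeVal (t := K)).comp hg

/-- If `X` is a separable Banach space and its dual has the UKK* property, then the weak*
topology and the norm topology coincide on the unit sphere of the dual: the inclusion of the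
unit sphere (with the norm topology) into the weak* dual is an inducing map. -/
theorem ukkStar_weakStar_eq_norm_on_sphere (X : Type*) [NormedAddCommGroup X]
    [NormedSpace ℝ X] [CompleteSpace X] [TopologicalSpace.SeparableSpace X]
    (hUKK : UKKStar X) :
    Topology.IsInducing
      (fun x : sphere (0 : StrongDual ℝ X) 1 => StrongDual.toWeakDual (x : StrongDual ℝ X)) :=
  ukkStar_weakStar_eq_norm_on_sphere_general X hUKK
end

section
/- Every irreducible representation of the C*-algebra K(H) of compact operators on a Hilbert space H is unitarily equivalent to the identity representation. -/
/-!
Fix a unit vector `e ∈ H` and let `p = |e⟩⟨e|`. A compact operator `S` is approximated in norm by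
`P S` with `P` a finite sum of rank-one operators; this makes `K(H)` a C⋆-algebra and, since star
homomorphisms of C⋆-algebras are contractive, a representation killing every rank-one operator
is zero. As `|x⟩⟨y| = |x⟩⟨e| p |e⟩⟨y|`, the representation `π` cannot kill `p`, so `π p` fixes a
unit vector `ξ`. Then `x ↦ π(|x⟩⟨e|) ξ` preserves inner products, intertwines `S` with `π S`, and
its range is a nonzero closed invariant subspace, hence all of `H'` by irreducibility.
-/

open ContinuousLinearMap InnerProductSpace

section Approximation

variable {𝕜 H : Type*} [RCLike 𝕜] [NormedAddCommGroup H] [InnerProductSpace 𝕜 H]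

theorem isCompactOperator_rankOne (x y : H) : IsCompactOperator (rankOne 𝕜 x y) :=
  (isCompactOperator_of_locallyCompactSpace_dom (innerSL 𝕜 y)).clm_comp (toSpanSingleton 𝕜 x)

theorem isCompactOperator_sum_rankOne {n : ℕ} (x y : Fin n → H) :
    IsCompactOperator (∑ i, rankOne 𝕜 (x i) (y i) : H →L[𝕜] H) :=
  (compactOperator (RingHom.id 𝕜) H H).sum_mem fun i _ => isCompactOperator_rankOne (x i) (y i)

theorem Submodule.norm_sub_starProjection_le {V : Submodule 𝕜 H} [V.HasOrthogonalProjection]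
    (y : H) {c : H} (hc : c ∈ V) : ‖y - V.starProjection y‖ ≤ ‖y - c‖ := by
  rw [starProjection_minimal]
  exact ciInf_le ⟨0, by rintro _ ⟨z, rfl⟩; exact norm_nonneg _⟩ (⟨c, hc⟩ : V)

/-- The finite sum of rank-one operators is the orthogonal projection onto the span of a finite
`ε`-net of the image of the unit ball. -/
theorem IsCompactOperator.exists_norm_sub_sum_rankOne_comp_le {S : H →L[𝕜] H}
    (hS : IsCompactOperator S) {ε : ℝ} (hε : 0 < ε) :
    ∃ (n : ℕ) (b : Fin n → H), ‖S - (∑ i, rankOne 𝕜 (b i) (b i)) ∘L S‖ ≤ ε := by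
  obtain ⟨t, ht, hcover⟩ := Metric.totallyBounded_iff.mp
    ((hS.isCompact_closure_image_closedBall 1).totallyBounded.subset subset_closure) ε hε
  set V := Submodule.span 𝕜 t
  have : FiniteDimensional 𝕜 V := FiniteDimensional.span_of_finite 𝕜 ht
  have : CompleteSpace V := FiniteDimensional.complete 𝕜 V
  let b := stdOrthonormalBasis 𝕜 V
  refine ⟨_, fun i => b i, ?_⟩
  rw [← b.starProjection_eq_sum_rankOne]
  refine opNorm_le_of_unit_norm hε.le fun u hu => ?_
  obtain ⟨c, hct, hc⟩ := Set.mem_iUnion₂.mp (hcover ⟨u, by simp [hu], rfl⟩)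
  calc ‖(S - V.starProjection ∘L S) u‖ = ‖S u - V.starProjection (S u)‖ := rfl
    _ ≤ ‖S u - c‖ := Submodule.norm_sub_starProjection_le _ (Submodule.subset_span hct)
    _ ≤ ε := (mem_ball_iff_norm.mp hc).le

theorem IsCompactOperator.adjoint [CompleteSpace H] {S : H →L[𝕜] H}
    (hS : IsCompactOperator S) : IsCompactOperator (adjoint S) := by
  refine isClosed_setOfPred_isCompactOperator.closure_subset <|
    Metric.mem_closure_iff.mpr fun ε hε => ?_
  obtain ⟨n, b, hb⟩ := hS.exists_norm_sub_sum_rankOne_comp_le (half_pos hε)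
  refine ⟨ContinuousLinearMap.adjoint ((∑ i, rankOne 𝕜 (b i) (b i)) ∘L S), ?_, ?_⟩
  · rw [adjoint_comp, map_sum]
    simp only [InnerProductSpace.adjoint_rankOne]
    exact (isCompactOperator_sum_rankOne b b).clm_comp (ContinuousLinearMap.adjoint S)
  · rw [dist_eq_norm, ← map_sub, LinearIsometryEquiv.norm_map]
    linarith

end Approximation

noncomputable section CompactOperators

variable (𝕜 H : Type*) [RCLike 𝕜] [NormedAddCommGroup H] [InnerProductSpace 𝕜 H]
  [CompleteSpace H]

def compactOperators : NonUnitalStarSubalgebra 𝕜 (H →L[𝕜] H) where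
  carrier := {T | IsCompactOperator T}
  add_mem' := IsCompactOperator.add
  zero_mem' := isCompactOperator_zero
  mul_mem' ha _ := ha.comp_clm _
  smul_mem' c _ h := h.smul c
  star_mem' := IsCompactOperator.adjoint

instance : IsClosed (compactOperators 𝕜 H : Set (H →L[𝕜] H)) :=
  isClosed_setOfPred_isCompactOperator

variable {𝕜 H}

def compactRankOne (x y : H) : compactOperators 𝕜 H :=
  ⟨rankOne 𝕜 x y, isCompactOperator_rankOne x y⟩

@[simp]
theorem coe_compactRankOne (x y : H) :
    ((compactRankOne x y : compactOperators 𝕜 H) : H →L[𝕜] H) = rankOne 𝕜 x y := rfl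

theorem compactRankOne_mul_compactRankOne (x y z w : H) :
    (compactRankOne x y : compactOperators 𝕜 H) * compactRankOne z w =
      inner 𝕜 y z • compactRankOne x w :=
  Subtype.ext (rankOne_comp_rankOne x y z w)

theorem mul_compactRankOne (S : compactOperators 𝕜 H) (x y : H) :
    S * compactRankOne x y = compactRankOne ((S : H →L[𝕜] H) x) y :=
  Subtype.ext (comp_rankOne x y (S : H →L[𝕜] H))

theorem star_compactRankOne (x y : H) :
    star (compactRankOne x y : compactOperators 𝕜 H) = compactRankOne y x :=
  Subtype.ext (adjoint_rankOne x y)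

theorem compactRankOne_add_left (x x' y : H) :
    (compactRankOne (x + x') y : compactOperators 𝕜 H) =
      compactRankOne x y + compactRankOne x' y :=
  Subtype.ext (by simp)

theorem compactRankOne_smul_left (c : 𝕜) (x y : H) :
    (compactRankOne (c • x) y : compactOperators 𝕜 H) = c • compactRankOne x y :=
  Subtype.ext (by simp)

theorem isIdempotentElem_compactRankOne_self {e : H} (he : ‖e‖ = 1) :
    IsIdempotentElem (compactRankOne e e : compactOperators 𝕜 H) :=
  Subtype.ext (isIdempotentElem_rankOne_self he)

end CompactOperators

theorem IsIdempotentElem.exists_norm_eq_one_apply_eq_self {𝕜 E : Type*} [RCLike 𝕜]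
    [NormedAddCommGroup E] [NormedSpace 𝕜 E] {q : E →L[𝕜] E} (hq : IsIdempotentElem q)
    (hq0 : q ≠ 0) : ∃ ξ : E, ‖ξ‖ = 1 ∧ q ξ = ξ := by
  obtain ⟨y, hy⟩ : ∃ y, q y ≠ 0 := by
    by_contra! h
    exact hq0 (ext h)
  refine ⟨(‖q y‖⁻¹ : 𝕜) • q y, norm_smul_inv_norm hy, ?_⟩
  rw [map_smul, ← mul_apply_eq_comp, hq.eq]

noncomputable section Representation

variable {H H' : Type*} [NormedAddCommGroup H] [InnerProductSpace ℂ H] [CompleteSpace H]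
  [NormedAddCommGroup H'] [InnerProductSpace ℂ H'] [CompleteSpace H']
  (φ : compactOperators ℂ H →⋆ₙₐ[ℂ] (H' →L[ℂ] H'))

theorem NonUnitalStarAlgHom.eq_zero_of_map_compactRankOne
    (h : ∀ x y : H, φ (compactRankOne x y) = 0) : φ = 0 := by
  ext S : 1
  refine norm_le_zero_iff.mp (le_of_forall_pos_le_add fun ε hε => ?_)
  obtain ⟨n, b, hb⟩ := S.2.exists_norm_sub_sum_rankOne_comp_le hε
  set P : compactOperators ℂ H := ∑ i, compactRankOne (b i) (b i)
  have hP : φ P = 0 := by simp [P, h]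
  calc ‖φ S‖ = ‖φ (S - P * S)‖ := by rw [map_sub, map_mul, hP, zero_mul, sub_zero]
    _ ≤ ‖S - P * S‖ := NonUnitalStarAlgHom.norm_apply_le φ _
    _ ≤ 0 + ε := by
      rw [zero_add]
      convert hb
      simp [P, mul_def]

theorem NonUnitalStarAlgHom.map_compactRankOne_self_ne_zero (hφ : φ ≠ 0) {e : H}
    (he : ‖e‖ = 1) : φ (compactRankOne e e) ≠ 0 := by
  intro h0
  refine hφ (φ.eq_zero_of_map_compactRankOne fun x y => ?_)
  have : (compactRankOne x y : compactOperators ℂ H) =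
      compactRankOne x e * compactRankOne e e * compactRankOne e y := by
    simp [compactRankOne_mul_compactRankOne, inner_self_eq_norm_sq_to_K, he]
  rw [this, map_mul, map_mul, h0, mul_zero, zero_mul]

def NonUnitalStarAlgHom.intertwiner (e : H) (ξ : H') : H →ₗ[ℂ] H' where
  toFun x := φ (compactRankOne x e) ξ
  map_add' x y := by simp [compactRankOne_add_left]
  map_smul' c x := by simp [compactRankOne_smul_left]

variable {φ} {e : H} {ξ : H'}

theorem NonUnitalStarAlgHom.intertwiner_apply_apply (S : compactOperators ℂ H) (x : H) :
    φ.intertwiner e ξ ((S : H →L[ℂ] H) x) = φ S (φ.intertwiner e ξ x) := by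
  simp [intertwiner, ← mul_compactRankOne, mul_apply_eq_comp]

theorem NonUnitalStarAlgHom.inner_intertwiner_apply (hξ : ‖ξ‖ = 1)
    (hfix : φ (compactRankOne e e) ξ = ξ) (x y : H) :
    inner ℂ (φ.intertwiner e ξ x) (φ.intertwiner e ξ y) = inner ℂ x y := by
  calc inner ℂ (φ (compactRankOne x e) ξ) (φ (compactRankOne y e) ξ)
      = inner ℂ ξ (φ (star (compactRankOne x e) * compactRankOne y e) ξ) := by
        rw [map_mul, map_star, star_eq_adjoint, mul_apply_eq_comp, adjoint_inner_right]
    _ = inner ℂ x y := by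
        rw [star_compactRankOne, compactRankOne_mul_compactRankOne, map_smul, smul_apply, hfix,
          inner_smul_right, inner_self_eq_norm_sq_to_K, hξ]
        simp

variable (φ) in
theorem NonUnitalStarAlgHom.exists_linearIsometryEquiv_intertwining (hφ : φ ≠ 0)
    (hirred : ∀ W : Submodule ℂ H', IsClosed (W : Set H') →
      (∀ S : compactOperators ℂ H, ∀ y ∈ W, φ S y ∈ W) → W = ⊥ ∨ W = ⊤) :
    ∃ U : H ≃ₗᵢ[ℂ] H', ∀ (S : compactOperators ℂ H) (x : H),
      U ((S : H →L[ℂ] H) x) = φ S (U x) := by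
  have : Nontrivial H := by
    by_contra! hH
    exact hφ (ext fun S => by rw [Subsingleton.elim S 0, map_zero, zero_apply])
  obtain ⟨e, he⟩ := exists_norm_eq H zero_le_one
  obtain ⟨ξ, hξ, hfix⟩ := ((isIdempotentElem_compactRankOne_self he).map φ)
    |>.exists_norm_eq_one_apply_eq_self (φ.map_compactRankOne_self_ne_zero hφ he)
  let U := (φ.intertwiner e ξ).isometryOfInner (inner_intertwiner_apply hξ hfix)
  have hrange : LinearMap.range (φ.intertwiner e ξ) = ⊤ := by
    refine (hirred _ ?_ ?_).resolve_left ?_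
    · rw [LinearMap.coe_range]
      exact U.isometry.isClosedEmbedding.isClosed_range
    · rintro S _ ⟨x, rfl⟩
      exact ⟨_, intertwiner_apply_apply S x⟩
    · exact (Submodule.ne_bot_iff _).mpr
        ⟨ξ, ⟨e, hfix⟩, norm_ne_zero_iff.mp (hξ ▸ one_ne_zero)⟩
  exact ⟨.ofSurjective U (LinearMap.range_eq_top.mp hrange), intertwiner_apply_apply⟩

end Representation

/-- Naimark: every irreducible *-representation of the C*-algebra `K(H)` of compact operators
on a Hilbert space `H` is unitarily equivalent to the identity representation.  Here a
representation of `K(H)` on a Hilbert space `H'` is a map `π` defined on the bounded operators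
which is additive, `ℂ`-homogeneous, multiplicative and star-preserving on the compact
operators, and irreducibility means that `π` is nonzero on the compacts and the only closed
subspaces invariant under all `π S`, `S` compact, are `⊥` and `⊤`. -/
theorem irreducible_rep_of_compacts_equiv_identity
    (H H' : Type*) [NormedAddCommGroup H] [InnerProductSpace ℂ H] [CompleteSpace H]
    [NormedAddCommGroup H'] [InnerProductSpace ℂ H'] [CompleteSpace H']
    (π : (H →L[ℂ] H) → (H' →L[ℂ] H'))
    (hadd : ∀ S T : H →L[ℂ] H, IsCompactOperator S → IsCompactOperator T →
      π (S + T) = π S + π T)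
    (hsmul : ∀ (c : ℂ) (S : H →L[ℂ] H), IsCompactOperator S → π (c • S) = c • π S)
    (hmul : ∀ S T : H →L[ℂ] H, IsCompactOperator S → IsCompactOperator T →
      π (S * T) = π S * π T)
    (hstar : ∀ S : H →L[ℂ] H, IsCompactOperator S → π (adjoint S) = adjoint (π S))
    (hnonzero : ∃ S : H →L[ℂ] H, IsCompactOperator S ∧ π S ≠ 0)
    (hirred : ∀ W : Submodule ℂ H', IsClosed (W : Set H') →
      (∀ S : H →L[ℂ] H, IsCompactOperator S → ∀ y ∈ W, π S y ∈ W) → W = ⊥ ∨ W = ⊤) :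
    ∃ U : H ≃ₗᵢ[ℂ] H', ∀ S : H →L[ℂ] H, IsCompactOperator S →
      ∀ x : H, U (S x) = π S (U x) := by
  let φ : compactOperators ℂ H →⋆ₙₐ[ℂ] (H' →L[ℂ] H') :=
    { toFun S := π S
      map_add' S T := hadd S T S.2 T.2
      map_zero' := by simpa using hadd 0 0 isCompactOperator_zero isCompactOperator_zero
      map_mul' S T := hmul S T S.2 T.2
      map_smul' c S := hsmul c S S.2
      map_star' S := hstar S S.2 }
  have hφ : φ ≠ 0 := by
    obtain ⟨S, hS, hS0⟩ := hnonzero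
    exact fun h => hS0 congr($h ⟨S, hS⟩)
  obtain ⟨U, hU⟩ := φ.exists_linearIsometryEquiv_intertwining hφ
    fun W hW hinv => hirred W hW fun S hS => hinv ⟨S, hS⟩
  exact ⟨U, fun S hS => hU ⟨S, hS⟩⟩
end
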